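/- arXiv:2108.02715 — 2 statements merged into one kernel-verified Lean document; each statement's English description precedes it below -/
import Mathlib

section
/- For every natural number k ≥ 1, real p ∈ (0,1], and real q > 1, a binomial B(k,p) random variable X̂ satisfies P(k·p/q ≤ X̂ ≤ q·k·p) ≥ 1 − exp(−k·(pq−p)²/(2σ² + 2(pq−p)/3)) − exp(−k·(p−p/q)²/(2σ² + 2(p−p/q)/3)), where σ² = p(1−p). (Bound 2: Q-error bound from Bernstein's inequality for uniform sampling with replacement.) -/
/-!
Union bound over the two tails. The upper tail is Chernoff's method:
`P(X ≥ a) ≤ e^{-ta} (1 - p + p e^t)^k` for `t ≥ 0`, and since `e^{ty} - 1 - ty ≤ y² (e^t - 1 - t)`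
for `y ≤ 1`, the centred Bernoulli variable has moment generating function at most
`exp (σ² (e^t - 1 - t))`. Together with `(2 - 2t/3)(e^t - 1 - t) ≤ t²`, the choice
`t = δ / (σ² + δ/3)` yields Bernstein's exponent `-k δ² / (2σ² + 2δ/3)`. The lower tail of
`B(k, p)` is the upper tail of `B(k, 1 - p)`, which has the same variance.
-/

open Classical in
/-- Probability that a binomial B(k,p) random variable satisfies predicate `P`. -/
noncomputable def binomProb (k : ℕ) (p : ℝ) (P : ℕ → Prop) : ℝ :=
  ∑ i ∈ Finset.range (k + 1),
    if P i then (k.choose i : ℝ) * p ^ i * (1 - p) ^ (k - i) else 0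

open Real Finset

lemma nonneg_of_hasDerivAt_of_map_zero {f f' : ℝ → ℝ} (hf : ∀ x, HasDerivAt f (f' x) x)
    (h0 : f 0 = 0) (hf' : ∀ x, 0 ≤ x → 0 ≤ f' x) {t : ℝ} (ht : 0 ≤ t) : 0 ≤ f t :=
  h0 ▸ monotoneOn_of_hasDerivWithinAt_nonneg (convex_Ici 0)
    (fun x _ => (hf x).continuousAt.continuousWithinAt) (fun x _ => (hf x).hasDerivWithinAt)
    (fun x hx => hf' x (interior_subset hx)) Set.self_mem_Ici ht ht

lemma hasDerivAt_exp_sub_one_sub (x : ℝ) :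
    HasDerivAt (fun t => exp t - 1 - t) (exp x - 1) x :=
  ((hasDerivAt_exp x).sub_const 1).sub (hasDerivAt_id x)

lemma exp_mul_sub_one_sub_le {y t : ℝ} (hy : y ≤ 1) (ht : 0 ≤ t) :
    exp (t * y) - 1 - t * y ≤ y ^ 2 * (exp t - 1 - t) := by
  have hderiv : ∀ x, HasDerivAt (fun t => y ^ 2 * (exp t - 1 - t) - (exp (t * y) - 1 - t * y))
      (y * (y * (exp x - 1) - (exp (x * y) - 1))) x := fun x => by
    have hlin : HasDerivAt (fun t => t * y) y x := by
      simpa using (hasDerivAt_id x).mul_const y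
    exact (((hasDerivAt_exp_sub_one_sub x).const_mul (y ^ 2)).sub
      ((hlin.exp.sub_const 1).sub hlin)).congr_deriv (by ring)
  -- `exp (x * y) - 1` lies between `x * y` and `y * (exp x - 1)`, both having the sign of `y`
  have hderiv_nonneg : ∀ x, 0 ≤ x → 0 ≤ y * (y * (exp x - 1) - (exp (x * y) - 1)) := by
    intro x hx
    rcases le_total 0 y with hy0 | hy0
    · have hconv : exp (x * y) ≤ 1 - y + y * exp x := by
        simpa [mul_comm] using convexOn_exp.2 (Set.mem_univ 0) (Set.mem_univ x) (by linarith) hy0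
          (by ring : 1 - y + y = 1)
      exact mul_nonneg hy0 (by linarith)
    · have h1 := add_one_le_exp (x * y)
      have h2 := add_one_le_exp x
      exact mul_nonneg_of_nonpos_of_nonpos hy0 (by nlinarith)
  have := nonneg_of_hasDerivAt_of_map_zero hderiv (by simp) hderiv_nonneg ht
  linarith

lemma two_sub_mul_exp_sub_one_sub_le_sq {t : ℝ} (ht : 0 ≤ t) :
    (2 - 2 * t / 3) * (exp t - 1 - t) ≤ t ^ 2 := by
  have hlin (x : ℝ) : HasDerivAt (fun t : ℝ => 2 - 2 * t / 3) (-(2 / 3)) x := by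
    simpa using ((hasDerivAt_id x).const_mul 2).div_const 3 |>.const_sub 2
  have hderiv' : ∀ x, HasDerivAt
      (fun t => 2 * t + 2 / 3 * (exp t - 1 - t) - (2 - 2 * t / 3) * (exp t - 1))
      (2 / 3 * (1 - exp x + x * exp x)) x := fun x =>
    ((((hasDerivAt_id x).const_mul 2).add
      ((hasDerivAt_exp_sub_one_sub x).const_mul (2 / 3))).sub
      ((hlin x).mul ((hasDerivAt_exp x).sub_const 1))).congr_deriv (by ring)
  have hderiv : ∀ x, HasDerivAt (fun t => t ^ 2 - (2 - 2 * t / 3) * (exp t - 1 - t))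
      (2 * x + 2 / 3 * (exp x - 1 - x) - (2 - 2 * x / 3) * (exp x - 1)) x := fun x =>
    ((hasDerivAt_pow 2 x).sub ((hlin x).mul (hasDerivAt_exp_sub_one_sub x))).congr_deriv
      (by ring)
  -- the second derivative is nonnegative because `1 - x ≤ exp (-x)`
  have hderiv2_nonneg : ∀ x, 0 ≤ x → 0 ≤ 2 / 3 * (1 - exp x + x * exp x) := by
    intro x _
    have h := mul_le_mul_of_nonneg_left (add_one_le_exp (-x)) (exp_pos x).le
    rw [← exp_add, add_neg_cancel, exp_zero] at h
    linarith
  have := nonneg_of_hasDerivAt_of_map_zero hderiv (by simp)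
    (fun x hx => nonneg_of_hasDerivAt_of_map_zero hderiv' (by simp) hderiv2_nonneg hx) ht
  linarith

lemma one_sub_add_mul_exp_le {p t : ℝ} (hp0 : 0 ≤ p) (hp1 : p ≤ 1) (ht : 0 ≤ t) :
    1 - p + p * exp t ≤ exp (t * p + p * (1 - p) * (exp t - 1 - t)) := by
  have hneg := exp_mul_sub_one_sub_le (y := -p) (by linarith) ht
  have hpos := exp_mul_sub_one_sub_le (y := 1 - p) (by linarith) ht
  have hcentered : (1 - p) * exp (t * -p) + p * exp (t * (1 - p)) ≤
      1 + p * (1 - p) * (exp t - 1 - t) := by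
    linarith [mul_le_mul_of_nonneg_left hneg (by linarith : 0 ≤ 1 - p),
      mul_le_mul_of_nonneg_left hpos hp0]
  calc 1 - p + p * exp t
      = exp (t * p) * ((1 - p) * exp (t * -p) + p * exp (t * (1 - p))) := by
        have e1 : exp (t * p) * exp (t * -p) = 1 := by rw [← exp_add]; simp
        have e2 : exp (t * p) * exp (t * (1 - p)) = exp t := by rw [← exp_add]; ring_nf
        linear_combination (p - 1) * e1 - p * e2
    _ ≤ exp (t * p) * exp (p * (1 - p) * (exp t - 1 - t)) := by
        gcongr
        exact hcentered.trans (by linarith [add_one_le_exp (p * (1 - p) * (exp t - 1 - t))])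
    _ = _ := (exp_add _ _).symm

lemma bernstein_exponent_le {v δ : ℝ} (hv : 0 ≤ v) (hδ : 0 < δ) :
    v * (exp (δ / (v + δ / 3)) - 1 - δ / (v + δ / 3)) - δ / (v + δ / 3) * δ ≤
      -δ ^ 2 / (2 * v + 2 * δ / 3) := by
  have hD : 0 < v + δ / 3 := by positivity
  set t := δ / (v + δ / 3) with ht
  have htD : t * (v + δ / 3) = δ := div_mul_cancel₀ δ hD.ne'
  have hφ : 2 * v * (exp t - 1 - t) ≤ t * δ := by
    have h := mul_le_mul_of_nonneg_right
      (two_sub_mul_exp_sub_one_sub_le_sq (div_pos hδ hD).le) hD.le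
    rw [← ht] at h
    calc 2 * v * (exp t - 1 - t) = (2 - 2 * t / 3) * (exp t - 1 - t) * (v + δ / 3) := by
          linear_combination (2 / 3) * (exp t - 1 - t) * htD
      _ ≤ t ^ 2 * (v + δ / 3) := h
      _ = t * δ := by linear_combination t * htD
  have hrhs : -δ ^ 2 / (2 * v + 2 * δ / 3) = -(t * δ) / 2 := by
    rw [ht]; field_simp
  rw [hrhs]
  linarith

lemma choose_mul_pow_mul_pow_nonneg (k i : ℕ) {p : ℝ} (hp0 : 0 ≤ p) (hp1 : p ≤ 1) :
    0 ≤ (k.choose i : ℝ) * p ^ i * (1 - p) ^ (k - i) := by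
  have := sub_nonneg.2 hp1
  positivity

section binomProb

variable {k : ℕ} {p : ℝ}

lemma binomProb_add_binomProb_not (P : ℕ → Prop) :
    binomProb k p P + binomProb k p (fun i => ¬P i) = 1 := by
  rw [binomProb, binomProb, ← sum_add_distrib]
  calc _ = ∑ i ∈ range (k + 1), p ^ i * (1 - p) ^ (k - i) * k.choose i :=
        sum_congr rfl fun i _ => by split_ifs <;> simp_all <;> ring
    _ = 1 := by rw [← add_pow, add_sub_cancel, one_pow]

lemma binomProb_le_add_of_imp (hp0 : 0 ≤ p) (hp1 : p ≤ 1) {P Q R : ℕ → Prop}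
    (h : ∀ i ≤ k, P i → Q i ∨ R i) :
    binomProb k p P ≤ binomProb k p Q + binomProb k p R := by
  rw [binomProb, binomProb, binomProb, ← sum_add_distrib]
  refine sum_le_sum fun i hi => ?_
  have hterm := choose_mul_pow_mul_pow_nonneg k i hp0 hp1
  have := h i (Nat.lt_succ_iff.1 (mem_range.1 hi))
  split_ifs <;> simp_all

lemma binomProb_mono (hp0 : 0 ≤ p) (hp1 : p ≤ 1) {P Q : ℕ → Prop} (h : ∀ i ≤ k, P i → Q i) :
    binomProb k p P ≤ binomProb k p Q := by
  simpa [binomProb] using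
    binomProb_le_add_of_imp (R := fun _ => False) hp0 hp1 fun i hi hP => .inl (h i hi hP)

lemma binomProb_one_sub (P : ℕ → Prop) :
    binomProb k (1 - p) P = binomProb k p (fun i => P (k - i)) := by
  rw [binomProb, binomProb, ← sum_range_reflect]
  refine sum_congr rfl fun i hi => ?_
  have hik : i ≤ k := Nat.lt_succ_iff.1 (mem_range.1 hi)
  rw [add_tsub_cancel_right, Nat.sub_sub_self hik, Nat.choose_symm hik, sub_sub_cancel]
  split_ifs <;> ring

lemma binomProb_le_exp_mul (hp0 : 0 ≤ p) (hp1 : p ≤ 1) {t : ℝ} (ht : 0 ≤ t) (a : ℝ) :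
    binomProb k p (fun i => a ≤ i) ≤ exp (-(t * a)) * (1 - p + p * exp t) ^ k := by
  rw [binomProb, add_comm (1 - p), add_pow, mul_sum]
  refine sum_le_sum fun i _ => ?_
  have hterm := choose_mul_pow_mul_pow_nonneg k i hp0 hp1
  have hrhs : exp (-(t * a)) * ((p * exp t) ^ i * (1 - p) ^ (k - i) * k.choose i) =
      exp (t * (i - a)) * ((k.choose i : ℝ) * p ^ i * (1 - p) ^ (k - i)) := by
    rw [mul_pow, ← exp_nat_mul, show t * (i - a) = -(t * a) + i * t by ring, exp_add]
    ring
  rw [hrhs]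
  split_ifs with ha
  · exact le_mul_of_one_le_left hterm (one_le_exp (by nlinarith))
  · positivity

theorem binomProb_upper_tail_le (hp0 : 0 ≤ p) (hp1 : p ≤ 1) {δ : ℝ} (hδ : 0 < δ) :
    binomProb k p (fun i => k * (p + δ) ≤ i) ≤
      exp (-(k * δ ^ 2) / (2 * (p * (1 - p)) + 2 * δ / 3)) := by
  have hv : 0 ≤ p * (1 - p) := mul_nonneg hp0 (sub_nonneg.2 hp1)
  set v := p * (1 - p)
  set t := δ / (v + δ / 3)
  have ht : 0 ≤ t := by positivity
  calc _ ≤ exp (-(t * (k * (p + δ)))) * (1 - p + p * exp t) ^ k :=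
        binomProb_le_exp_mul hp0 hp1 ht _
    _ ≤ exp (-(t * (k * (p + δ)))) * exp (t * p + v * (exp t - 1 - t)) ^ k := by
        have : 0 ≤ 1 - p + p * exp t := by have := sub_nonneg.2 hp1; positivity
        gcongr
        exact one_sub_add_mul_exp_le hp0 hp1 ht
    _ = exp (k * (v * (exp t - 1 - t) - t * δ)) := by
        rw [← exp_nat_mul, ← exp_add]; ring_nf
    _ ≤ exp (k * (-δ ^ 2 / (2 * v + 2 * δ / 3))) := by
        gcongr
        exact bernstein_exponent_le hv hδ
    _ = _ := by ring_nf

theorem binomProb_lower_tail_le (hp0 : 0 ≤ p) (hp1 : p ≤ 1) {δ : ℝ} (hδ : 0 < δ) :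
    binomProb k p (fun i => i ≤ k * (p - δ)) ≤
      exp (-(k * δ ^ 2) / (2 * (p * (1 - p)) + 2 * δ / 3)) := by
  have h := binomProb_upper_tail_le (k := k) (sub_nonneg.2 hp1) (sub_le_self 1 hp0) hδ
  rw [binomProb_one_sub, sub_sub_cancel, mul_comm (1 - p)] at h
  refine (binomProb_mono hp0 hp1 fun i hi hlow => ?_).trans h
  rw [Nat.cast_sub hi]
  linarith

end binomProb

theorem qerror_bound_bernstein_general (k : ℕ) (p : ℝ) (hp0 : 0 < p) (hp1 : p ≤ 1)
    (q : ℝ) (hq : 1 < q) :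
    1 - Real.exp (-(k * (p * q - p) ^ 2) / (2 * (p * (1 - p)) + 2 * (p * q - p) / 3))
      - Real.exp (-(k * (p - p / q) ^ 2) / (2 * (p * (1 - p)) + 2 * (p - p / q) / 3)) ≤
    binomProb k p (fun i => k * p / q ≤ (i : ℝ) ∧ (i : ℝ) ≤ q * k * p) := by
  have hδ₁ : 0 < p * q - p := by nlinarith
  have hδ₂ : 0 < p - p / q := sub_pos.2 (div_lt_self hp0 hq)
  have hsplit := binomProb_le_add_of_imp (k := k) hp0.le hp1
    (P := fun i => ¬(k * p / q ≤ (i : ℝ) ∧ (i : ℝ) ≤ q * k * p))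
    (Q := fun i => i ≤ k * (p - (p - p / q))) (R := fun i => k * (p + (p * q - p)) ≤ i)
    fun i _ hi => by
      rcases not_and_or.1 hi with hlow | hhigh
      · left
        rw [sub_sub_cancel, ← mul_div_assoc]
        exact (not_le.1 hlow).le
      · right
        rw [add_sub_cancel]
        linarith [not_le.1 hhigh]
  linarith [binomProb_add_binomProb_not (k := k) (p := p)
      (fun i => k * p / q ≤ (i : ℝ) ∧ (i : ℝ) ≤ q * k * p),
    binomProb_lower_tail_le (k := k) hp0.le hp1 hδ₂, binomProb_upper_tail_le (k := k) hp0.le hp1 hδ₁]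

theorem qerror_bound_bernstein (k : ℕ) (hk : 1 ≤ k) (p : ℝ) (hp0 : 0 < p) (hp1 : p ≤ 1)
    (q : ℝ) (hq : 1 < q) :
    1 - Real.exp (-(k * (p * q - p) ^ 2) / (2 * (p * (1 - p)) + 2 * (p * q - p) / 3))
      - Real.exp (-(k * (p - p / q) ^ 2) / (2 * (p * (1 - p)) + 2 * (p - p / q) / 3)) ≤
    binomProb k p (fun i => k * p / q ≤ (i : ℝ) ∧ (i : ℝ) ≤ q * k * p) :=
  qerror_bound_bernstein_general k p hp0 hp1 q hq
end

section
/- Bound 3: For every population of n ≥ 2 rows of which m satisfy a predicate (0 < m ≤ n, p = m/n), every sample size 1 ≤ k < n, and every real q ≥ 1, the hypergeometric random variable X̂ counting satisfying rows among k rows drawn uniformly without replacement satisfies P(k·p/q ≤ X̂ ≤ q·k·p) ≥ 1 − exp(−2k·(pq−p)²/ρ) − exp(−2k·(p−p/q)²/ρ). (Q-error bound from the Hoeffding–Serfling inequality for uniform sampling without replacement.) -/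
/-!
Let `X_s` count the satisfying rows among the first `s` rows of a uniformly random ordering
of the table. Serfling's observation is that `(X_s - s p) / (n - s)` is a martingale in `s`:
one more draw moves it by `(B - g) / (n - s - 1)`, where `B` is a Bernoulli variable with
mean `g = (m - X_s) / (n - s)`. Hoeffding's lemma bounds the conditional moment generating
function of each increment, so the moment generating function of the martingale at time `s` is
at most `exp (λ² / 8 · ∑_{j = n-s}^{n-1} 1 / j²)`, and Chernoff's bound turns this into a tail
bound. Comparing the sum with a telescoping series gives the factor `1 - (k - 1) / n`; running
the same argument on the `n - k` rows left out of the sample gives `(1 - k / n) (1 + 1 / k)`.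
The lower tail is the upper tail of the complementary predicate, and the Q-error exceeds `q`
only if `X̂` falls in one of the two tails.
-/

open Classical in
/-- Probability that a hypergeometric random variable (number of "satisfying" rows among
`k` rows drawn uniformly at random without replacement from `n` rows of which `m` satisfy
the predicate) satisfies `P`. -/
noncomputable def hyperProb (n m k : ℕ) (P : ℕ → Prop) : ℝ :=
  ∑ i ∈ Finset.range (k + 1),
    if P i then ((m.choose i : ℝ) * ((n - m).choose (k - i) : ℝ)) / (n.choose k : ℝ) else 0

open Classical in
/-- The factor ρ from the Hoeffding–Serfling/Bernstein–Serfling inequalities. -/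
noncomputable def rho (n k : ℕ) : ℝ :=
  if (k : ℝ) ≤ (n : ℝ) / 2 then 1 - ((k : ℝ) - 1) / n
  else (1 - (k : ℝ) / n) * (1 + 1 / (k : ℝ))

open Classical in
/-- The factor ζ from the Bernstein–Serfling inequality. -/
noncomputable def zeta (n k : ℕ) : ℝ :=
  if (k : ℝ) ≤ (n : ℝ) / 2 then
    4 / 3 + Real.sqrt ((k * ((k : ℝ) - 1)) / (n * ((n : ℝ) - k + 1)))
  else
    4 / 3 + Real.sqrt ((((n : ℝ) - k - 1) * ((n : ℝ) - k)) / (((k : ℝ) + 1) * n))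

open Finset Real

noncomputable def hypergeom (n m k i : ℕ) : ℝ :=
  ((m.choose i : ℝ) * ((n - m).choose (k - i) : ℝ)) / (n.choose k : ℝ)

section Hypergeom

variable {n m k : ℕ}

lemma hypergeom_nonneg (n m k i : ℕ) : 0 ≤ hypergeom n m k i := by
  unfold hypergeom; positivity

lemma le_of_hypergeom_ne_zero {i : ℕ} (h : hypergeom n m k i ≠ 0) :
    i ≤ m ∧ k - i ≤ n - m := by
  unfold hypergeom at h
  obtain ⟨hi, hki⟩ := mul_ne_zero_iff.mp (div_ne_zero_iff.mp h).1
  constructor <;> by_contra hlt <;> simp_all [Nat.choose_eq_zero_of_lt (not_le.mp hlt)]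

lemma hypergeom_eq_zero_of_lt {i : ℕ} (h : m < i) : hypergeom n m k i = 0 := by
  simp [hypergeom, Nat.choose_eq_zero_of_lt h]

lemma sum_hypergeom (hm : m ≤ n) (hk : k ≤ n) :
    ∑ i ∈ range (k + 1), hypergeom n m k i = 1 := by
  have vandermonde : ∑ i ∈ range (k + 1), m.choose i * (n - m).choose (k - i) = n.choose k := by
    have := Nat.add_choose_eq m (n - m) k
    rwa [Nat.add_sub_cancel' hm, Finset.Nat.sum_antidiagonal_eq_sum_range_succ_mk, eq_comm] at this
  have hpos : (0 : ℝ) < n.choose k := by exact_mod_cast Nat.choose_pos hk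
  simp only [hypergeom]
  rw [← Finset.sum_div, div_eq_one_iff_eq hpos.ne']
  exact_mod_cast vandermonde

lemma hypergeom_reflect (hm : m ≤ n) {i : ℕ} (hi : i ≤ k) :
    hypergeom n m k (k - i) = hypergeom n (n - m) k i := by
  simp only [hypergeom, Nat.sub_sub_self hi, Nat.sub_sub_self hm, mul_comm]

lemma hypergeom_compl (hm : m ≤ n) (hk : k ≤ n) {i : ℕ} (hik : i ≤ k) (him : i ≤ m)
    (hsupp : k + m ≤ n + i) : hypergeom n m k i = hypergeom n m (n - k) (m - i) := by
  unfold hypergeom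
  rw [Nat.choose_symm him, Nat.choose_symm hk, show n - k - (m - i) = n - m - (k - i) by omega,
    Nat.choose_symm (by omega)]

end Hypergeom

section HyperProb

open Classical

variable {n m k : ℕ}

lemma hyperProb_eq_sum (P : ℕ → Prop) :
    hyperProb n m k P = ∑ i ∈ range (k + 1), if P i then hypergeom n m k i else 0 := rfl

lemma hyperProb_congr {P Q : ℕ → Prop} (h : ∀ i ≤ k, i ≤ m → (P i ↔ Q i)) :
    hyperProb n m k P = hyperProb n m k Q := by
  rw [hyperProb_eq_sum, hyperProb_eq_sum]
  refine sum_congr rfl fun i hi => ?_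
  by_cases him : i ≤ m
  · exact if_congr (h i (Nat.lt_succ_iff.mp (mem_range.mp hi)) him) rfl rfl
  · simp [hypergeom_eq_zero_of_lt (not_le.mp him)]

lemma hyperProb_le_add {P Q R : ℕ → Prop} (h : ∀ i, P i → Q i ∨ R i) :
    hyperProb n m k P ≤ hyperProb n m k Q + hyperProb n m k R := by
  simp only [hyperProb_eq_sum, ← sum_add_distrib]
  refine sum_le_sum fun i _ => ?_
  have := hypergeom_nonneg n m k i
  split_ifs <;> first | linarith | exact absurd (h i ‹_›) (by tauto)

lemma hyperProb_true (hm : m ≤ n) (hk : k ≤ n) : hyperProb n m k (fun _ => True) = 1 := by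
  simpa [hyperProb_eq_sum] using sum_hypergeom hm hk

lemma hyperProb_reflect (hm : m ≤ n) (P : ℕ → Prop) :
    hyperProb n m k P = hyperProb n (n - m) k (fun i => P (k - i)) := by
  rw [hyperProb_eq_sum, hyperProb_eq_sum, ← sum_range_reflect]
  refine sum_congr rfl fun i hi => ?_
  have hik : i ≤ k := Nat.lt_succ_iff.mp (mem_range.mp hi)
  rw [Nat.add_sub_cancel]
  exact if_congr Iff.rfl (hypergeom_reflect hm hik) rfl

lemma hyperProb_compl (hm : m ≤ n) (hk : k ≤ n) (P : ℕ → Prop) :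
    hyperProb n m k P = hyperProb n m (n - k) (fun j => P (m - j)) := by
  rw [hyperProb_eq_sum, hyperProb_eq_sum]
  have supp : ∀ {k i : ℕ}, i ∈ range (k + 1) → hypergeom n m k i ≠ 0 →
      i ≤ k ∧ i ≤ m ∧ k - i ≤ n - m :=
    fun hi h => ⟨Nat.lt_succ_iff.mp (mem_range.mp hi), le_of_hypergeom_ne_zero h⟩
  refine sum_bij_ne_zero (fun i _ _ => m - i) (fun i hi h => ?_) (fun i hi h j hj h' hij => ?_)
    (fun j hj h => ⟨m - j, ?_⟩) (fun i hi h => ?_)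
  all_goals simp only [ne_eq, ite_eq_right_iff, Classical.not_imp] at *
  · have := supp hi h.2; simp only [mem_range]; omega
  · have := supp hi h.2; have := supp hj h'.2; omega
  · have := supp hj h.2
    refine ⟨by simp only [mem_range]; omega, ?_, by omega⟩
    rwa [hypergeom_compl hm hk (by omega) (by omega) (by omega), Nat.sub_sub_self this.2.1]
  · have := supp hi h.2
    exact if_congr (by simp only [Nat.sub_sub_self this.2.1])
      (hypergeom_compl hm hk this.1 this.2.1 (by omega)) rfl

end HyperProb

lemma Nat.cast_choose_succ_right_eq {R : Type*} [Ring R] (n k : ℕ) :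
    (n.choose (k + 1) : R) * (k + 1) = n.choose k * (n - k) := by
  rcases le_or_gt k n with hkn | hnk
  · have := congrArg (Nat.cast : ℕ → R) (Nat.choose_succ_right_eq n k)
    push_cast [hkn] at this
    exact this
  · simp [Nat.choose_eq_zero_of_lt hnk, Nat.choose_eq_zero_of_lt (hnk.trans (Nat.lt_succ_self k))]

-- Double counting of samples of size `s + 1` with one marked row: `failures` and `successes`
-- count those whose marked row is non-satisfying, resp. satisfying, by first drawing the rest.
lemma sum_choose_mul_choose_succ_mul (m m' s : ℕ) (f : ℕ → ℝ) :
    ∑ i ∈ range (s + 2), (m.choose i : ℝ) * m'.choose (s + 1 - i) * (s + 1) * f i =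
      ∑ i ∈ range (s + 1), (m.choose i : ℝ) * m'.choose (s - i) *
        ((m' - s + i) * f i + (m - i) * f (i + 1)) := by
  have failures :
      ∑ i ∈ range (s + 2), (m.choose i : ℝ) * m'.choose (s + 1 - i) * (s + 1 - i) * f i
        = ∑ i ∈ range (s + 1),
            (m.choose i : ℝ) * m'.choose (s - i) * ((m' - s + i) * f i) := by
    rw [sum_range_succ]
    push_cast
    rw [sub_self, mul_zero, zero_mul, add_zero]
    refine sum_congr rfl fun i hi => ?_
    have hi : i ≤ s := Nat.lt_succ_iff.mp (mem_range.mp hi)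
    have := Nat.cast_choose_succ_right_eq (R := ℝ) m' (s - i)
    rw [Nat.cast_sub hi, show s + 1 - i = s - i + 1 by omega] at *
    linear_combination (m.choose i : ℝ) * f i * this
  have successes :
      ∑ i ∈ range (s + 2), (m.choose i : ℝ) * m'.choose (s + 1 - i) * i * f i
        = ∑ i ∈ range (s + 1),
            (m.choose i : ℝ) * m'.choose (s - i) * ((m - i) * f (i + 1)) := by
    rw [sum_range_succ']
    push_cast
    rw [mul_zero, zero_mul, add_zero]
    refine sum_congr rfl fun i _ => ?_
    have := Nat.cast_choose_succ_right_eq (R := ℝ) m i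
    linear_combination (m'.choose (s - i) : ℝ) * f (i + 1) * this
  simp only [mul_add, sum_add_distrib]
  rw [← failures, ← successes, ← sum_add_distrib]
  exact sum_congr rfl fun i _ => by ring

lemma sum_hypergeom_succ_mul {n m s : ℕ} (hm : m ≤ n) (hs : s < n) (f : ℕ → ℝ) :
    ∑ i ∈ range (s + 2), hypergeom n m (s + 1) i * f i =
      ∑ i ∈ range (s + 1), hypergeom n m s i *
        ((1 - (m - i) / (n - s)) * f i + (m - i) / (n - s) * f (i + 1)) := by
  have hns : (0 : ℝ) < n - s := sub_pos.mpr (by exact_mod_cast hs)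
  have hC' : ((n.choose (s + 1) : ℕ) : ℝ) = n.choose s * (n - s) / (s + 1) := by
    rw [eq_div_iff (by positivity), Nat.cast_choose_succ_right_eq]
  have := sum_choose_mul_choose_succ_mul m (n - m) s f
  rw [Nat.cast_sub hm] at this
  simp only [hypergeom, hC']
  calc _ = (∑ i ∈ range (s + 2),
            (m.choose i : ℝ) * (n - m).choose (s + 1 - i) * (s + 1) * f i)
          / (n.choose s * (n - s)) := by
        rw [sum_div]; exact sum_congr rfl fun i _ => by field_simp
    _ = _ := by
        rw [this, sum_div]; exact sum_congr rfl fun i _ => by field_simp; ring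

open MeasureTheory ProbabilityTheory in
lemma one_sub_add_mul_exp_le_s13 {g : ℝ} (h0 : 0 ≤ g) (h1 : g ≤ 1) (u : ℝ) :
    1 - g + g * exp u ≤ exp (g * u + u ^ 2 / 8) := by
  let μ : Measure Bool :=
    ENNReal.ofReal (1 - g) • Measure.dirac false + ENNReal.ofReal g • Measure.dirac true
  have : IsProbabilityMeasure μ := ⟨by simp [μ, ← ENNReal.ofReal_add (sub_nonneg.2 h1) h0]⟩
  let X : Bool → ℝ := fun b => if b then 1 else 0
  have hmgf :
      mgf (fun b => X b - μ[X]) μ u = g * exp (u * (1 - g)) + (1 - g) * exp (-(u * g)) := by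
    simp [mgf, μ, X, integral_fintype, h0, sub_nonneg.2 h1, measureReal_def]
  have hoeffding := (hasSubgaussianMGF_of_mem_Icc (μ := μ) (X := X) (a := 0) (b := 1)
    (by fun_prop) (ae_of_all _ fun b => by cases b <;> simp [X])).mgf_le u
  rw [hmgf] at hoeffding
  have hsplit : exp (u * (1 - g)) = exp u * exp (-(u * g)) := by rw [← exp_add]; ring_nf
  have hinv : exp (g * u) * exp (-(u * g)) = 1 := by rw [← exp_add]; ring_nf; exact exp_zero
  calc 1 - g + g * exp u = exp (g * u) * (g * exp (u * (1 - g)) + (1 - g) * exp (-(u * g))) := by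
        linear_combination (-(1 - g + g * exp u)) * hinv - exp (g * u) * g * hsplit
    _ ≤ exp (g * u) * exp (u ^ 2 / 8) := by
        gcongr
        exact hoeffding.trans_eq (by norm_num; ring_nf)
    _ = exp (g * u + u ^ 2 / 8) := (exp_add _ _).symm

noncomputable def serflingMartingale (n m s i : ℕ) : ℝ := (i - s * (m / n : ℝ)) / (n - s)

noncomputable def serflingVar (n s : ℕ) : ℝ := ∑ j ∈ Ico (n - s) n, 1 / (j : ℝ) ^ 2

section Serfling

variable {n m : ℕ}

lemma serflingVar_succ {s : ℕ} (hs : s < n) :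
    serflingVar n (s + 1) = serflingVar n s + 1 / ((n : ℝ) - s - 1) ^ 2 := by
  rw [serflingVar, sum_eq_sum_Ico_succ_bot (by omega), show n - (s + 1) + 1 = n - s by omega,
    Nat.cast_sub (by omega), add_comm, serflingVar]
  push_cast
  ring_nf

lemma serflingMartingale_step_mgf_le (hm : m ≤ n) {s i : ℕ} (hs : s + 1 < n) (him : i ≤ m)
    (hsupp : s - i ≤ n - m) (l : ℝ) :
    (1 - (m - i) / (n - s)) * exp (l * serflingMartingale n m (s + 1) i)
        + (m - i) / (n - s) * exp (l * serflingMartingale n m (s + 1) (i + 1))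
      ≤ exp (l * serflingMartingale n m s i)
          * exp (l ^ 2 / 8 * (1 / ((n : ℝ) - s - 1) ^ 2)) := by
  have hn : (0 : ℝ) < n := by norm_cast; omega
  have hns : (0 : ℝ) < n - s - 1 := by
    have : ((s + 1 : ℕ) : ℝ) < n := by exact_mod_cast hs
    push_cast at this; linarith
  have hne : (n : ℝ) - (s + 1) ≠ 0 := by linarith
  have hne' : (n : ℝ) - s ≠ 0 := by linarith
  set g : ℝ := (m - i) / (n - s)
  set u : ℝ := l / (n - s - 1)
  have hg0 : 0 ≤ g := div_nonneg (by simp [him]) (by linarith)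
  have hg1 : g ≤ 1 := by
    rw [div_le_one (by linarith)]
    have : m + s ≤ n + i := by omega
    have : (m : ℝ) + s ≤ n + i := by exact_mod_cast this
    linarith
  have hmart : l * serflingMartingale n m (s + 1) i + g * u = l * serflingMartingale n m s i := by
    simp only [serflingMartingale, g, u]
    push_cast
    field_simp
    ring
  have hjump :
      l * serflingMartingale n m (s + 1) (i + 1) = l * serflingMartingale n m (s + 1) i + u := by
    simp only [serflingMartingale, u]
    push_cast
    field_simp
    ring
  rw [hjump, exp_add]
  calc (1 - g) * exp (l * serflingMartingale n m (s + 1) i)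
        + g * (exp (l * serflingMartingale n m (s + 1) i) * exp u)
      = exp (l * serflingMartingale n m (s + 1) i) * (1 - g + g * exp u) := by ring
    _ ≤ exp (l * serflingMartingale n m (s + 1) i) * exp (g * u + u ^ 2 / 8) := by
        gcongr; exact one_sub_add_mul_exp_le_s13 hg0 hg1 u
    _ = _ := by
        rw [← exp_add, ← exp_add, ← add_assoc, hmart]
        congr 2
        simp only [u]
        field_simp

lemma sum_hypergeom_mul_exp_le (hm : m ≤ n) (l : ℝ) {s : ℕ} (hs : s < n) :
    ∑ i ∈ range (s + 1), hypergeom n m s i * exp (l * serflingMartingale n m s i)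
      ≤ exp (l ^ 2 / 8 * serflingVar n s) := by
  induction s with
  | zero => simp [hypergeom, serflingVar, serflingMartingale]
  | succ s ih =>
    calc _ = ∑ i ∈ range (s + 1), hypergeom n m s i *
            ((1 - (m - i) / (n - s)) * exp (l * serflingMartingale n m (s + 1) i)
              + (m - i) / (n - s) * exp (l * serflingMartingale n m (s + 1) (i + 1))) :=
          sum_hypergeom_succ_mul hm (by omega) _
      _ ≤ ∑ i ∈ range (s + 1), hypergeom n m s i * exp (l * serflingMartingale n m s i)
            * exp (l ^ 2 / 8 * (1 / ((n : ℝ) - s - 1) ^ 2)) := by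
          refine sum_le_sum fun i _ => ?_
          rcases eq_or_ne (hypergeom n m s i) 0 with h0 | h0
          · simp [h0]
          · obtain ⟨him, hsupp⟩ := le_of_hypergeom_ne_zero h0
            rw [mul_assoc]
            exact mul_le_mul_of_nonneg_left (serflingMartingale_step_mgf_le hm hs him hsupp l)
              (hypergeom_nonneg n m s i)
      _ ≤ exp (l ^ 2 / 8 * serflingVar n s)
            * exp (l ^ 2 / 8 * (1 / ((n : ℝ) - s - 1) ^ 2)) := by
          rw [← sum_mul]
          gcongr
          exact ih (by omega)
      _ = _ := by rw [← exp_add, ← mul_add, serflingVar_succ (by omega)]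

end Serfling

section Tails

open Classical

variable {n m : ℕ}

lemma hyperProb_le_sum_mul_exp {k : ℕ} {P : ℕ → Prop} {φ : ℕ → ℝ}
    (h : ∀ i, P i → 0 ≤ φ i) :
    hyperProb n m k P ≤ ∑ i ∈ range (k + 1), hypergeom n m k i * exp (φ i) := by
  rw [hyperProb_eq_sum]
  refine sum_le_sum fun i _ => ?_
  split_ifs with hP
  · exact le_mul_of_one_le_right (hypergeom_nonneg n m k i) (one_le_exp (h i hP))
  · exact mul_nonneg (hypergeom_nonneg n m k i) (exp_pos _).le

lemma hyperProb_upper_tail_le (hm : m ≤ n) {s : ℕ} (hs : s < n) {τ D : ℝ} (hτ : 0 ≤ τ)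
    (hD : 0 < D) (hVD : ((n : ℝ) - s) ^ 2 * serflingVar n s ≤ D) :
    hyperProb n m s (fun i => s * (m / n : ℝ) + τ < i) ≤ exp (-(2 * τ ^ 2) / D) := by
  have hc : (0 : ℝ) < n - s := sub_pos.mpr (by exact_mod_cast hs)
  set l := 4 * (n - s) * τ / D
  have hl : 0 ≤ l := by positivity
  calc _ ≤ ∑ i ∈ range (s + 1),
          hypergeom n m s i * exp (l * serflingMartingale n m s i + -(l * τ / (n - s))) := by
        refine hyperProb_le_sum_mul_exp fun i hi => ?_
        have : l * serflingMartingale n m s i + -(l * τ / (n - s))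
            = l * ((i - s * (m / n : ℝ) - τ) / (n - s)) := by
          rw [serflingMartingale]; ring
        exact this ▸ mul_nonneg hl (div_nonneg (by linarith) hc.le)
    _ = (∑ i ∈ range (s + 1), hypergeom n m s i * exp (l * serflingMartingale n m s i))
          * exp (-(l * τ / (n - s))) := by
        simp only [exp_add, ← mul_assoc, sum_mul]
    _ ≤ exp (l ^ 2 / 8 * serflingVar n s) * exp (-(l * τ / (n - s))) := by
        gcongr
        exact sum_hypergeom_mul_exp_le hm l hs
    _ ≤ exp (-(2 * τ ^ 2) / D) := by
        rw [← exp_add, exp_le_exp]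
        have hvar : l ^ 2 / 8 * serflingVar n s
            = 2 * τ ^ 2 / D ^ 2 * (((n : ℝ) - s) ^ 2 * serflingVar n s) := by
          simp only [l]; field_simp; ring
        have hlin : l * τ / (n - s) = 2 * (2 * τ ^ 2 / D) := by
          simp only [l]; field_simp; ring
        have : 2 * τ ^ 2 / D ^ 2 * (((n : ℝ) - s) ^ 2 * serflingVar n s) ≤ 2 * τ ^ 2 / D := by
          calc _ ≤ 2 * τ ^ 2 / D ^ 2 * D := by gcongr
            _ = 2 * τ ^ 2 / D := by field_simp
        rw [hvar, hlin, neg_div]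
        linarith

lemma hyperProb_lower_tail_eq (hm : m ≤ n) (hn : 0 < n) (s : ℕ) (τ : ℝ) :
    hyperProb n m s (fun i => i < s * (m / n : ℝ) - τ)
      = hyperProb n (n - m) s (fun i => s * ((n - m : ℕ) / n : ℝ) + τ < i) := by
  rw [hyperProb_reflect hm]
  refine hyperProb_congr fun i hi _ => ?_
  have hn' : (n : ℝ) ≠ 0 := by positivity
  rw [Nat.cast_sub hi, Nat.cast_sub hm, sub_div, div_self hn', mul_sub, mul_one]
  constructor <;> intro <;> linarith

lemma hyperProb_lower_tail_le (hm : m ≤ n) {s : ℕ} (hs : s < n) {τ D : ℝ} (hτ : 0 ≤ τ)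
    (hD : 0 < D) (hVD : ((n : ℝ) - s) ^ 2 * serflingVar n s ≤ D) :
    hyperProb n m s (fun i => i < s * (m / n : ℝ) - τ) ≤ exp (-(2 * τ ^ 2) / D) := by
  rw [hyperProb_lower_tail_eq hm (by omega)]
  exact hyperProb_upper_tail_le (Nat.sub_le n m) hs hτ hD hVD

end Tails

-- `1 / j ^ 2 ≤ (1 + 1 / a) * (1 / j - 1 / (j + 1))` for `j ≥ a`, and the right side telescopes.
lemma sum_Ico_one_div_sq_le {a : ℕ} (ha : 1 ≤ a) {b : ℕ} (hab : a ≤ b) :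
    ∑ j ∈ Ico a b, 1 / (j : ℝ) ^ 2 ≤ ((b : ℝ) - a) * (a + 1) / (a ^ 2 * b) := by
  have ha' : (1 : ℝ) ≤ a := by exact_mod_cast ha
  induction b, hab using Nat.le_induction with
  | base => simp
  | succ b hab ih =>
    have hb : (a : ℝ) ≤ b := by exact_mod_cast hab
    have hb0 : (0 : ℝ) < b := by linarith
    have hterm : 1 / (b : ℝ) ^ 2 ≤ (a + 1) / (a * b * (b + 1)) := by
      rw [div_le_div_iff₀ (by positivity) (by positivity)]
      nlinarith
    have htelescope : ((b : ℝ) - a) * (a + 1) / (a ^ 2 * b) + (a + 1) / (a * b * (b + 1))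
        = ((b : ℝ) + 1 - a) * (a + 1) / (a ^ 2 * (b + 1)) := by
      field_simp
      ring
    rw [sum_Ico_succ_top hab]
    push_cast
    rw [← htelescope]
    linarith

section Rho

variable {n k : ℕ}

lemma sq_sub_mul_serflingVar_le (hk : k < n) :
    ((n : ℝ) - k) ^ 2 * serflingVar n k ≤ k * (1 - (k - 1) / n) := by
  have hnk : ((n - k : ℕ) : ℝ) = n - k := Nat.cast_sub hk.le
  have hpos : (0 : ℝ) < n - k := by rw [← hnk]; exact_mod_cast Nat.sub_pos_of_lt hk
  have hV := sum_Ico_one_div_sq_le (a := n - k) (by omega) (Nat.sub_le n k)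
  rw [hnk, sub_sub_cancel] at hV
  calc ((n : ℝ) - k) ^ 2 * serflingVar n k
      ≤ ((n : ℝ) - k) ^ 2 * (k * (n - k + 1) / ((n - k) ^ 2 * n)) := by
        rw [serflingVar]; gcongr
    _ = (k : ℝ) * (1 - (k - 1) / n) := by
        have : (n : ℝ) ≠ 0 := by linarith
        field_simp
        ring

lemma sq_mul_serflingVar_sub_le (hk1 : 1 ≤ k) (hk : k < n) :
    (k : ℝ) ^ 2 * serflingVar n (n - k) ≤ k * ((1 - k / n) * (1 + 1 / k)) := by
  have hV := sum_Ico_one_div_sq_le hk1 hk.le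
  have hn : (0 : ℝ) < n := by exact_mod_cast (by omega : 0 < n)
  rw [serflingVar, Nat.sub_sub_self hk.le]
  calc (k : ℝ) ^ 2 * ∑ j ∈ Ico k n, 1 / (j : ℝ) ^ 2
      ≤ (k : ℝ) ^ 2 * ((n - k) * (k + 1) / (k ^ 2 * n)) := by gcongr
    _ = (k : ℝ) * ((1 - k / n) * (1 + 1 / k)) := by
        field_simp

lemma rho_pos (hk1 : 1 ≤ k) (hk : k < n) : 0 < rho n k := by
  have hk' : (1 : ℝ) ≤ k := by exact_mod_cast hk1
  have hkn : (k : ℝ) < n := by exact_mod_cast hk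
  unfold rho
  split_ifs
  · rw [sub_pos, div_lt_one (by linarith)]; linarith
  · exact mul_pos (by rw [sub_pos, div_lt_one (by linarith)]; exact hkn) (by positivity)

end Rho

section HoeffdingSerfling

variable {n m k : ℕ}

lemma hyperProb_upper_tail_le_rho (hm : m ≤ n) (hk1 : 1 ≤ k) (hkn : k < n) {t : ℝ}
    (ht : 0 ≤ t) :
    hyperProb n m k (fun i => k * (m / n : ℝ) + k * t < i)
      ≤ exp (-(2 * k * t ^ 2) / rho n k) := by
  have hn : (n : ℝ) ≠ 0 := by norm_cast; omega
  have hρ := rho_pos hk1 hkn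
  rw [show -(2 * k * t ^ 2) / rho n k = -(2 * (k * t) ^ 2) / (k * rho n k) by field_simp]
  unfold rho at hρ ⊢
  split_ifs at hρ ⊢
  · exact hyperProb_upper_tail_le hm hkn (by positivity) (by positivity)
      (sq_sub_mul_serflingVar_le hkn)
  · rw [hyperProb_compl hm hkn.le,
      hyperProb_congr (Q := fun j => j < (n - k : ℕ) * (m / n : ℝ) - k * t)]
    · refine hyperProb_lower_tail_le hm (by omega) (by positivity) (by positivity) ?_
      rw [Nat.cast_sub hkn.le, sub_sub_cancel]
      exact sq_mul_serflingVar_sub_le hk1 hkn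
    · intro j _ hj
      rw [Nat.cast_sub hj, Nat.cast_sub hkn.le, sub_mul, mul_div_cancel₀ _ hn]
      constructor <;> intro <;> linarith

lemma hyperProb_lower_tail_le_rho (hm : m ≤ n) (hk1 : 1 ≤ k) (hkn : k < n) {t : ℝ}
    (ht : 0 ≤ t) :
    hyperProb n m k (fun i => i < k * (m / n : ℝ) - k * t)
      ≤ exp (-(2 * k * t ^ 2) / rho n k) := by
  rw [hyperProb_lower_tail_eq hm (by omega)]
  exact hyperProb_upper_tail_le_rho (Nat.sub_le n m) hk1 hkn ht

end HoeffdingSerfling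

theorem qerror_bound_hoeffding_serfling_general (n m k : ℕ) (hmn : m ≤ n)
    (hk1 : 1 ≤ k) (hkn : k < n) (p : ℝ) (hp : p = (m : ℝ) / n) (q : ℝ) (hq : 1 ≤ q) :
    1 - Real.exp (-(2 * k * (p * q - p) ^ 2) / rho n k)
      - Real.exp (-(2 * k * (p - p / q) ^ 2) / rho n k) ≤
    hyperProb n m k (fun i => k * p / q ≤ (i : ℝ) ∧ (i : ℝ) ≤ q * k * p) := by
  have hp0 : 0 ≤ p := hp ▸ by positivity
  have hupper := hyperProb_upper_tail_le_rho hmn hk1 hkn (t := p * q - p) (by nlinarith)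
  have hlower := hyperProb_lower_tail_le_rho hmn hk1 hkn (t := p - p / q)
    (sub_nonneg.mpr (div_le_self hp0 hq))
  rw [← hp, show k * p + k * (p * q - p) = q * k * p by ring] at hupper
  rw [← hp, show k * p - k * (p - p / q) = k * p / q by ring] at hlower
  have hcover : 1 ≤ hyperProb n m k (fun i => k * p / q ≤ (i : ℝ) ∧ (i : ℝ) ≤ q * k * p)
      + (hyperProb n m k (fun i => (i : ℝ) < k * p / q)
        + hyperProb n m k (fun i => q * k * p < (i : ℝ))) := by
    rw [← hyperProb_true hmn hkn.le]
    exact (hyperProb_le_add (R := fun i => (i : ℝ) < k * p / q ∨ q * k * p < i)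
        fun i _ => by grind)
      |>.trans (add_le_add le_rfl (hyperProb_le_add fun _ => id))
  linarith

theorem qerror_bound_hoeffding_serfling (n m k : ℕ) (hn : 2 ≤ n) (hm0 : 0 < m) (hmn : m ≤ n)
    (hk1 : 1 ≤ k) (hkn : k < n) (p : ℝ) (hp : p = (m : ℝ) / n) (q : ℝ) (hq : 1 ≤ q) :
    1 - Real.exp (-(2 * k * (p * q - p) ^ 2) / rho n k)
      - Real.exp (-(2 * k * (p - p / q) ^ 2) / rho n k) ≤
    hyperProb n m k (fun i => k * p / q ≤ (i : ℝ) ∧ (i : ℝ) ≤ q * k * p) :=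
  qerror_bound_hoeffding_serfling_general n m k hmn hk1 hkn p hp q hq
end
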